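/- Let B = M₂(ℝ), and for b ∈ B write b^ι := tr(b)·1 − b (so b·b^ι = det(b)·1). Fix a real number Δ < 0 and an element j ∈ B with tr(j) = 0 and j² = Δ·1 (so det(j) = |Δ|). Define the ℂ-valued pairing h(x,y) := (Δ/2)·tr(x·y^ι) + (i·|Δ|^{1/2}/2)·tr(j·x·y^ι) for x, y ∈ B; note h(x,x) = Δ·det(x) is real. For z = x₀ + i·y₀ in the upper half-plane (y₀ > 0), let J_z := (1/y₀)·[[x₀, −x₀² − y₀²],[1, −x₀]]. For a traceless v ∈ B set v_ζ := v − (tr(v·J_z^ι)/2)·J_z and R^o(v,z) := −2·det(v_ζ). Now let t be a nonzero real number, y ∈ GL₂(ℝ), and x := t·y^{−1}·j·y (which is traceless). Then for every z in the upper half-plane and every nonzero w ∈ B satisfying w·J_z = −|Δ|^{−1/2}·j·w and h(w,w) ≠ 0, one has: R^o(x,z) + 2·det(x) = (2·t²/(|Δ|·det(y)²)) · ( −2·|h(y,w)|²/h(w,w) + Δ·det(y) )². -/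

import Mathlib

/-!
Put `K = -|Δ|^{-1/2}·j` and `J = J_z`. Both are traceless of determinant 1, so `K² = J² = -1`,
and `h = (Δ/2)·(tr(x y^ι) + i·tr(K x y^ι))`. The line `ζ(z) = {w | w J = K w}` is a complex line
for the complex structure given by left multiplication by `K`, and `P y = (y - K y J)/2` is the
`h`-orthogonal projection onto it. On a complex line Cauchy–Schwarz is an equality, so
`R_φ(y,z) = -2·h(P y, P y) = -2Δ·det(P y)`, and expanding `det(y - K y J)` gives
`R_φ(y,z) + Δ·det y = (Δ/2)·tr(K y J y^ι)`. On the other side, projecting away from `J` gives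
`R^o(x,z) + 2·det x = tr(x J)²/2`, and `tr(x J) = t·tr(j y J y^ι)/det y`.
-/

open Matrix

/-- The main involution `b ↦ b^ι = tr(b)·1 - b` on `M₂(ℝ)`. -/
noncomputable def invol (b : Matrix (Fin 2) (Fin 2) ℝ) : Matrix (Fin 2) (Fin 2) ℝ :=
  (Matrix.trace b) • (1 : Matrix (Fin 2) (Fin 2) ℝ) - b

/-- The matrix `J_z` attached to a point `z = x₀ + i y₀` of the upper half-plane. -/
noncomputable def Jmat (x₀ y₀ : ℝ) : Matrix (Fin 2) (Fin 2) ℝ :=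
  (1 / y₀) • !![x₀, -x₀ ^ 2 - y₀ ^ 2; 1, -x₀]

/-- The hermitian pairing
`h(x,y) = (Δ/2)·tr(x·y^ι) + (i·|Δ|^{1/2}/2)·tr(j·x·y^ι)`. -/
noncomputable def hform (Δ : ℝ) (j : Matrix (Fin 2) (Fin 2) ℝ)
    (x y : Matrix (Fin 2) (Fin 2) ℝ) : ℂ :=
  ((Δ / 2) * Matrix.trace (x * invol y) : ℝ)
    + Complex.I * ((Real.sqrt |Δ| / 2) * Matrix.trace (j * x * invol y) : ℝ)

/-- The orthogonal majorant `R^o(v,z) = -2·det(v_ζ)`, where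
`v_ζ = v - (tr(v·J_z^ι)/2)·J_z`. -/
noncomputable def Ro (x₀ y₀ : ℝ) (v : Matrix (Fin 2) (Fin 2) ℝ) : ℝ :=
  -2 * Matrix.det (v - (Matrix.trace (v * invol (Jmat x₀ y₀)) / 2) • Jmat x₀ y₀)

section TwoByTwo

variable {R : Type*} [CommRing R]

theorem adjugate_fin_two_eq_trace_smul_one_sub (A : Matrix (Fin 2) (Fin 2) R) :
    adjugate A = trace A • 1 - A := by
  ext i k
  fin_cases i <;> fin_cases k <;> simp [adjugate_fin_two, trace_fin_two]

theorem adjugate_eq_neg_of_trace_eq_zero {A : Matrix (Fin 2) (Fin 2) R} (hA : trace A = 0) :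
    adjugate A = -A := by
  rw [adjugate_fin_two_eq_trace_smul_one_sub, hA, zero_smul, zero_sub]

theorem det_add_fin_two (A B : Matrix (Fin 2) (Fin 2) R) :
    det (A + B) = det A + det B + trace (A * adjugate B) := by
  simp only [det_fin_two, trace_fin_two, adjugate_fin_two, Matrix.add_apply, mul_apply, of_apply,
    cons_val', cons_val_zero, cons_val_one, cons_val_fin_one, Fin.sum_univ_two]
  ring

theorem mul_self_eq_neg_one_of_trace_eq_zero_of_det_eq_one {A : Matrix (Fin 2) (Fin 2) R}
    (hA : trace A = 0) (hAd : det A = 1) : A * A = -1 := by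
  have := mul_adjugate A
  rwa [adjugate_eq_neg_of_trace_eq_zero hA, hAd, one_smul, mul_neg, neg_eq_iff_eq_neg] at this

theorem det_eq_neg_of_mul_self_eq_smul_one [Nontrivial R] {A : Matrix (Fin 2) (Fin 2) R} {c : R}
    (hA : trace A = 0) (hAA : A * A = c • 1) : det A = -c := by
  have := mul_adjugate A
  rw [adjugate_eq_neg_of_trace_eq_zero hA, mul_neg, hAA, ← neg_smul] at this
  simpa only [Matrix.smul_apply, one_apply_eq, smul_eq_mul, mul_one] using
    (congr_fun (congr_fun this 0) 0).symm

/-- When `K² = -1`, the matrices commuting with `K` are the `a + bK`, and this is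
`|a + bi|² = det (a + bK)` with `a = tr m / 2`, `b = -tr (K m) / 2`. -/
theorem trace_sq_add_trace_mul_sq_of_commute {K m : Matrix (Fin 2) (Fin 2) R}
    (hK : trace K = 0) (hKd : det K = 1) (hm : K * m = m * K) :
    trace m ^ 2 + trace (K * m) ^ 2 = 4 * det m := by
  have h₀₀ := congr_fun (congr_fun hm 0) 0
  have h₀₁ := congr_fun (congr_fun hm 0) 1
  have h₁₀ := congr_fun (congr_fun hm 1) 0
  simp only [mul_apply, Fin.sum_univ_two] at h₀₀ h₀₁ h₁₀
  rw [trace_fin_two] at hK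
  rw [det_fin_two] at hKd
  simp only [trace_fin_two, det_fin_two, mul_apply, Fin.sum_univ_two]
  grind

end TwoByTwo

section TwoByTwoField

variable {𝕜 : Type*} [Field 𝕜]

theorem trace_inv_mul_mul_mul (y j J : Matrix (Fin 2) (Fin 2) 𝕜) :
    trace (y⁻¹ * j * y * J) = trace (j * y * J * adjugate y) / det y := by
  rw [inv_def, Ring.inverse_eq_inv', smul_mul_assoc, smul_mul_assoc, smul_mul_assoc, trace_smul,
    mul_assoc, mul_assoc, trace_mul_comm, smul_eq_mul, inv_mul_eq_div]
  simp only [mul_assoc]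

theorem det_sub_half_trace_mul_adjugate_smul [CharZero 𝕜] {J : Matrix (Fin 2) (Fin 2) 𝕜} (hJ : trace J = 0)
    (hJd : det J = 1) (v : Matrix (Fin 2) (Fin 2) 𝕜) :
    det (v - (trace (v * adjugate J) / 2) • J) = det v - trace (v * J) ^ 2 / 4 := by
  rw [sub_eq_add_neg, det_add_fin_two, ← neg_smul, adjugate_smul,
    adjugate_eq_neg_of_trace_eq_zero hJ, det_smul, hJd]
  simp only [Fintype.card_fin, mul_neg, trace_neg, mul_smul_comm, trace_smul, smul_eq_mul]
  ring

end TwoByTwoField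

theorem invol_eq_adjugate (b : Matrix (Fin 2) (Fin 2) ℝ) : invol b = adjugate b :=
  (adjugate_fin_two_eq_trace_smul_one_sub b).symm

theorem trace_Jmat (x₀ y₀ : ℝ) : trace (Jmat x₀ y₀) = 0 := by
  simp [Jmat, trace_fin_two]

theorem det_Jmat (x₀ : ℝ) {y₀ : ℝ} (hy₀ : y₀ ≠ 0) : det (Jmat x₀ y₀) = 1 := by
  rw [Jmat, det_smul, det_fin_two_of, Fintype.card_fin]
  field_simp
  ring

theorem Ro_add_two_det (x₀ : ℝ) {y₀ : ℝ} (hy₀ : y₀ ≠ 0) (v : Matrix (Fin 2) (Fin 2) ℝ) :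
    Ro x₀ y₀ v + 2 * det v = trace (v * Jmat x₀ y₀) ^ 2 / 2 := by
  rw [Ro, invol_eq_adjugate,
    det_sub_half_trace_mul_adjugate_smul (trace_Jmat x₀ y₀) (det_Jmat x₀ hy₀)]
  ring

theorem Ro_conj_add_two_det (x₀ : ℝ) {y₀ : ℝ} (hy₀ : y₀ ≠ 0) (t : ℝ)
    (j y : Matrix (Fin 2) (Fin 2) ℝ) :
    Ro x₀ y₀ (t • (y⁻¹ * j * y)) + 2 * det (t • (y⁻¹ * j * y)) =
      t ^ 2 * trace (j * y * Jmat x₀ y₀ * adjugate y) ^ 2 / (2 * det y ^ 2) := by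
  rw [Ro_add_two_det x₀ hy₀, smul_mul_assoc, trace_smul, trace_inv_mul_mul_mul, smul_eq_mul]
  ring

noncomputable def hermForm (K x y : Matrix (Fin 2) (Fin 2) ℝ) : ℂ :=
  trace (x * adjugate y) + Complex.I * trace (K * x * adjugate y)

theorem sqrt_abs_sq_of_neg {Δ : ℝ} (hΔ : Δ < 0) : √|Δ| ^ 2 = -Δ := by
  rw [Real.sq_sqrt (abs_nonneg Δ), abs_of_neg hΔ]

theorem hform_eq_hermForm {Δ : ℝ} (hΔ : Δ < 0) (j x y : Matrix (Fin 2) (Fin 2) ℝ) :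
    hform Δ j x y = (Δ / 2 : ℝ) * hermForm ((-(√|Δ|)⁻¹) • j) x y := by
  have hs : Δ / 2 * -(√|Δ|)⁻¹ = √|Δ| / 2 := by
    have hs₀ : √|Δ| ≠ 0 := Real.sqrt_ne_zero'.2 (abs_pos.2 hΔ.ne)
    field_simp
    exact (sqrt_abs_sq_of_neg hΔ).symm
  have hsℂ := congrArg Complex.ofReal hs
  push_cast at hsℂ
  simp only [hform, hermForm, invol_eq_adjugate, smul_mul_assoc, trace_smul, smul_eq_mul]
  push_cast
  linear_combination (-Complex.I * ((trace (j * x * adjugate y) : ℝ) : ℂ)) * hsℂ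

theorem det_neg_inv_sqrt_abs_smul {Δ : ℝ} (hΔ : Δ < 0) {j : Matrix (Fin 2) (Fin 2) ℝ}
    (hj : trace j = 0) (hjj : j * j = Δ • 1) : det ((-(√|Δ|)⁻¹) • j) = 1 := by
  have hs₀ : √|Δ| ≠ 0 := Real.sqrt_ne_zero'.2 (abs_pos.2 hΔ.ne)
  rw [det_smul, det_eq_neg_of_mul_self_eq_smul_one hj hjj, Fintype.card_fin]
  field_simp
  exact (sqrt_abs_sq_of_neg hΔ).symm

/-- The `hermForm K`-orthogonal projection onto the line `{w | w * J = K * w}`. -/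
noncomputable def projLine (K J y : Matrix (Fin 2) (Fin 2) ℝ) : Matrix (Fin 2) (Fin 2) ℝ :=
  (1 / 2 : ℝ) • (y - K * y * J)

section Line

variable {K J : Matrix (Fin 2) (Fin 2) ℝ}

theorem hermForm_self (hK : trace K = 0) (w : Matrix (Fin 2) (Fin 2) ℝ) :
    hermForm K w w = 2 * det w := by
  simp [hermForm, mul_assoc, mul_adjugate, trace_smul, hK, trace_one, mul_comm]

theorem mul_adjugate_eq_adjugate_mul_of_mul_eq (hK : trace K = 0) (hJ : trace J = 0)
    {w : Matrix (Fin 2) (Fin 2) ℝ} (hw : w * J = K * w) :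
    J * adjugate w = adjugate w * K := by
  simpa [adjugate_mul_distrib, adjugate_eq_neg_of_trace_eq_zero hK,
    adjugate_eq_neg_of_trace_eq_zero hJ] using congrArg adjugate hw

theorem hermForm_mul_mul (hK : trace K = 0) (hKd : det K = 1) (hJ : trace J = 0)
    {w : Matrix (Fin 2) (Fin 2) ℝ} (hw : w * J = K * w) (y : Matrix (Fin 2) (Fin 2) ℝ) :
    hermForm K (K * y * J) w = -hermForm K y w := by
  have hJw := mul_adjugate_eq_adjugate_mul_of_mul_eq hK hJ hw
  have hKK := mul_self_eq_neg_one_of_trace_eq_zero_of_det_eq_one hK hKd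
  have h₁ : trace (K * y * J * adjugate w) = -trace (y * adjugate w) := by
    rw [mul_assoc, hJw, ← mul_assoc, trace_mul_comm, ← mul_assoc, ← mul_assoc, hKK]
    simp
  have h₂ : trace (K * (K * y * J) * adjugate w) = -trace (K * y * adjugate w) := by
    rw [mul_assoc, mul_assoc, hJw, ← mul_assoc, ← mul_assoc, trace_mul_comm, ← mul_assoc,
      ← mul_assoc, hKK]
    simp
  simp only [hermForm, h₁, h₂]
  push_cast
  ring

theorem hermForm_projLine (hK : trace K = 0) (hKd : det K = 1) (hJ : trace J = 0)
    {w : Matrix (Fin 2) (Fin 2) ℝ} (hw : w * J = K * w) (y : Matrix (Fin 2) (Fin 2) ℝ) :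
    hermForm K (projLine K J y) w = hermForm K y w := by
  have h : hermForm K (projLine K J y) w = (hermForm K y w - hermForm K (K * y * J) w) / 2 := by
    simp only [hermForm, projLine, smul_mul_assoc, mul_smul_comm, sub_mul, mul_sub, trace_smul,
      trace_sub, smul_eq_mul]
    push_cast
    ring
  rw [h, hermForm_mul_mul hK hKd hJ hw]
  ring

theorem projLine_mul (hK : trace K = 0) (hKd : det K = 1) (hJ : trace J = 0) (hJd : det J = 1)
    (y : Matrix (Fin 2) (Fin 2) ℝ) : projLine K J y * J = K * projLine K J y := by
  have hKK := mul_self_eq_neg_one_of_trace_eq_zero_of_det_eq_one hK hKd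
  have hJJ := mul_self_eq_neg_one_of_trace_eq_zero_of_det_eq_one hJ hJd
  simp only [projLine, smul_mul_assoc, mul_smul_comm, sub_mul, mul_sub, mul_assoc, hJJ,
    ← mul_assoc K K, hKK]
  simp only [mul_neg, mul_one, neg_mul, one_mul, sub_neg_eq_add, add_comm]

theorem norm_hermForm_sq_of_mul_eq (hK : trace K = 0) (hKd : det K = 1) (hJ : trace J = 0)
    {u w : Matrix (Fin 2) (Fin 2) ℝ} (hu : u * J = K * u) (hw : w * J = K * w) :
    ‖hermForm K u w‖ ^ 2 = 4 * det u * det w := by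
  have hcomm : K * (u * adjugate w) = u * adjugate w * K := by
    rw [← mul_assoc, ← hu, mul_assoc, mul_adjugate_eq_adjugate_mul_of_mul_eq hK hJ hw, mul_assoc]
  rw [Complex.sq_norm, hermForm, mul_comm Complex.I, mul_assoc K, Complex.normSq_add_mul_I,
    trace_sq_add_trace_mul_sq_of_commute hK hKd hcomm, det_mul, det_adjugate]
  simp only [Fintype.card_fin, Nat.add_one_sub_one, pow_one]
  ring

theorem det_projLine (hK : trace K = 0) (hKd : det K = 1) (hJ : trace J = 0) (hJd : det J = 1)
    (y : Matrix (Fin 2) (Fin 2) ℝ) :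
    det (projLine K J y) = det y / 2 - trace (K * y * J * adjugate y) / 4 := by
  rw [projLine, det_smul, sub_eq_add_neg, det_add_fin_two, ← neg_mul, ← neg_mul, det_mul, det_mul,
    adjugate_mul_distrib, adjugate_mul_distrib, adjugate_eq_neg_of_trace_eq_zero hJ,
    adjugate_eq_neg_of_trace_eq_zero (A := -K) (by rw [trace_neg, hK, neg_zero]), det_neg, hKd,
    hJd]
  simp only [Fintype.card_fin, neg_neg, neg_mul, mul_neg, trace_neg, ← mul_assoc]
  rw [trace_mul_comm _ K]
  simp only [← mul_assoc]
  ring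

theorem neg_two_mul_norm_hermForm_sq_div_add_two_det (hK : trace K = 0) (hKd : det K = 1)
    (hJ : trace J = 0) (hJd : det J = 1) {w : Matrix (Fin 2) (Fin 2) ℝ} (hw : w * J = K * w)
    (hdw : det w ≠ 0) (y : Matrix (Fin 2) (Fin 2) ℝ) :
    -2 * ‖hermForm K y w‖ ^ 2 / (2 * det w) + 2 * det y = trace (K * y * J * adjugate y) := by
  rw [← hermForm_projLine hK hKd hJ hw,
    norm_hermForm_sq_of_mul_eq hK hKd hJ (projLine_mul hK hKd hJ hJd y) hw,
    det_projLine hK hKd hJ hJd]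
  field_simp
  ring

end Line

theorem majorant_comparison_general (Δ : ℝ) (hΔ : Δ < 0)
    (j : Matrix (Fin 2) (Fin 2) ℝ) (hjtr : Matrix.trace j = 0)
    (hjsq : j * j = Δ • (1 : Matrix (Fin 2) (Fin 2) ℝ))
    (t : ℝ)
    (y : Matrix (Fin 2) (Fin 2) ℝ)
    (x₀ y₀ : ℝ) (hy₀ : 0 < y₀)
    (w : Matrix (Fin 2) (Fin 2) ℝ)
    (hweq : w * Jmat x₀ y₀ = (-(Real.sqrt |Δ|)⁻¹) • (j * w))
    (hwh : hform Δ j w w ≠ 0) :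
    ((Ro x₀ y₀ (t • (y⁻¹ * j * y)) + 2 * Matrix.det (t • (y⁻¹ * j * y)) : ℝ) : ℂ)
      = ((2 * t ^ 2 / (|Δ| * Matrix.det y ^ 2) : ℝ) : ℂ)
        * (-2 * ((‖hform Δ j y w‖ : ℝ) : ℂ) ^ 2 / hform Δ j w w
            + ((Δ * Matrix.det y : ℝ) : ℂ)) ^ 2 := by
  set K := (-(√|Δ|)⁻¹) • j with hK_def
  set J := Jmat x₀ y₀
  have hK : trace K = 0 := by rw [trace_smul, hjtr, smul_zero]
  have hKd : det K = 1 := det_neg_inv_sqrt_abs_smul hΔ hjtr hjsq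
  have hw : w * J = K * w := by rw [hweq, smul_mul_assoc]
  have hww : hform Δ j w w = ((Δ * det w : ℝ) : ℂ) := by
    rw [hform_eq_hermForm hΔ, hermForm_self hK]; push_cast; ring
  have hdw : det w ≠ 0 := fun h ↦ hwh (by rw [hww, h, mul_zero, Complex.ofReal_zero])
  have hrhs : -2 * ‖hform Δ j y w‖ ^ 2 / (Δ * det w) + Δ * det y
      = Δ / 2 * trace (K * y * J * adjugate y) := by
    rw [← neg_two_mul_norm_hermForm_sq_div_add_two_det hK hKd (trace_Jmat x₀ y₀)
      (det_Jmat x₀ hy₀.ne') hw hdw y,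
      hform_eq_hermForm hΔ, ← hK_def, norm_mul, Complex.norm_real, Real.norm_eq_abs, mul_pow,
      sq_abs]
    field_simp
  have hrhsℂ : -2 * ((‖hform Δ j y w‖ : ℝ) : ℂ) ^ 2 / hform Δ j w w + ((Δ * det y : ℝ) : ℂ)
      = ((Δ / 2 * trace (K * y * J * adjugate y) : ℝ) : ℂ) := by
    rw [hww, ← hrhs]
    push_cast
    ring
  have htrace : trace (j * y * J * adjugate y) = -√|Δ| * trace (K * y * J * adjugate y) := by
    have hs₀ : √|Δ| ≠ 0 := Real.sqrt_ne_zero'.2 (abs_pos.2 hΔ.ne)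
    simp only [K, smul_mul_assoc, trace_smul, smul_eq_mul]
    field_simp
  rw [Ro_conj_add_two_det x₀ hy₀.ne', htrace, hrhsℂ]
  norm_cast
  rw [mul_pow _ (trace _), neg_sq, sqrt_abs_sq_of_neg hΔ, abs_of_neg hΔ]
  field_simp

/-- The majorant comparison lemma: for `x = t·y⁻¹·j·y`,
`R^o(x,z) + 2·det(x) = (2t²/(|Δ|·det(y)²))·(R_φ(y,z) + Δ·det(y))²`,
where `R_φ(y,z) = -2|h(y,w)|²/h(w,w)` for any nonzero `w` spanning the line attached
to `z` (i.e. `w·J_z = -|Δ|^{-1/2}·j·w`) with `h(w,w) ≠ 0`. -/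
theorem majorant_comparison (Δ : ℝ) (hΔ : Δ < 0)
    (j : Matrix (Fin 2) (Fin 2) ℝ) (hjtr : Matrix.trace j = 0)
    (hjsq : j * j = Δ • (1 : Matrix (Fin 2) (Fin 2) ℝ))
    (t : ℝ) (ht : t ≠ 0)
    (y : Matrix (Fin 2) (Fin 2) ℝ) (hy : Matrix.det y ≠ 0)
    (x₀ y₀ : ℝ) (hy₀ : 0 < y₀)
    (w : Matrix (Fin 2) (Fin 2) ℝ) (hw : w ≠ 0)
    (hweq : w * Jmat x₀ y₀ = (-(Real.sqrt |Δ|)⁻¹) • (j * w))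
    (hwh : hform Δ j w w ≠ 0) :
    ((Ro x₀ y₀ (t • (y⁻¹ * j * y)) + 2 * Matrix.det (t • (y⁻¹ * j * y)) : ℝ) : ℂ)
      = ((2 * t ^ 2 / (|Δ| * Matrix.det y ^ 2) : ℝ) : ℂ)
        * (-2 * ((‖hform Δ j y w‖ : ℝ) : ℂ) ^ 2 / hform Δ j w w
            + ((Δ * Matrix.det y : ℝ) : ℂ)) ^ 2 :=
  majorant_comparison_general Δ hΔ j hjtr hjsq t y x₀ y₀ hy₀ w hweq hwh
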